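/- Let k be a field, V a finite set, A the k-algebra of all functions V → k, and A^(2) the k-algebra of all functions V^(2) → k, both with pointwise operations. Let P be a nonempty subset of V^(2), let I be the ideal of A^(2) consisting of all functions vanishing outside P, and set S(I) := {h ∈ A : (h⊗1 − 1⊗h)·a = 0 for all a ∈ I}, where (h⊗1 − 1⊗h) denotes the function (u,v) ↦ h(u) − h(v) on V^(2). Then the dimension of S(I) as a k-vector space equals the number of connected components of the undirected graph G_P on vertex set V whose edges are the unordered pairs {u,v} such that (u,v) ∈ P or (v,u) ∈ P. -/

import Mathlib

def Tup (V : Type*) (s : ℕ) : Type _ :=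
  {f : Fin s → V // Function.Injective f}

/-- The ideal of functions on `V^(2)` vanishing outside `P`. -/
def vanishOutside (k : Type*) {V : Type*} [Field k] (P : Set (Tup V 2)) :
    Ideal (Tup V 2 → k) where
  carrier := {a | ∀ w ∉ P, a w = 0}
  zero_mem' := by intro w _; rfl
  add_mem' := by
    intro a b ha hb w hw
    simp [Pi.add_apply, ha w hw, hb w hw]
  smul_mem' := by
    intro c a ha w hw
    simp [Pi.smul_apply, smul_eq_mul, ha w hw]

/-- The function `h ⊗ 1 − 1 ⊗ h : (u, v) ↦ h(u) − h(v)` on `V^(2)`. -/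
def diffFun {k V : Type*} [Field k] (h : V → k) : Tup V 2 → k :=
  fun w => h (w.1 0) - h (w.1 1)

/-- The subalgebra `S(I) = {h : (h⊗1 − 1⊗h)·a = 0 for all a ∈ I}`, as a `k`-subspace. -/
def SSub (k : Type*) {V : Type*} [Field k] (P : Set (Tup V 2)) : Submodule k (V → k) where
  carrier := {h | ∀ a ∈ vanishOutside k P, diffFun h * a = 0}
  zero_mem' := by
    intro a _
    funext w
    simp [diffFun]
  add_mem' := by
    intro h₁ h₂ hh₁ hh₂ a ha
    funext w
    have e₁ := congrFun (hh₁ a ha) w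
    have e₂ := congrFun (hh₂ a ha) w
    simp only [diffFun, Pi.mul_apply, Pi.add_apply, Pi.zero_apply] at e₁ e₂ ⊢
    linear_combination e₁ + e₂
  smul_mem' := by
    intro c h hh a ha
    funext w
    have e := congrFun (hh a ha) w
    simp only [diffFun, Pi.mul_apply, Pi.smul_apply, Pi.zero_apply, smul_eq_mul] at e ⊢
    linear_combination c * e

/-- The undirected graph on `V` whose edges are pairs `{u, v}` with `(u,v) ∈ P` or
`(v,u) ∈ P`. -/
def pairGraph {V : Type*} (P : Set (Tup V 2)) : SimpleGraph V where
  Adj u v := ∃ w ∈ P, (w.1 0 = u ∧ w.1 1 = v) ∨ (w.1 0 = v ∧ w.1 1 = u)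
  symm := by
    constructor
    intro u v ⟨w, hw, h⟩
    exact ⟨w, hw, h.symm⟩
  loopless := by
    constructor
    intro u ⟨w, hw, h⟩
    have h01 : w.1 0 = w.1 1 := by
      rcases h with ⟨h0, h1⟩ | ⟨h0, h1⟩ <;> rw [h0, h1]
    exact absurd (w.2 h01) (by decide)

/-!
Testing the condition `(h ⊗ 1 − 1 ⊗ h) · a = 0` against the indicator of a single pair of `P`
shows that `S(I)` consists of the functions with `h u = h v` for every `(u, v) ∈ P`, i.e. the
functions constant along the edges of `G_P`. These are exactly the functions that factor through
the set of connected components, and pulling back along the surjection `V → π₀(G_P)` identifies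
them with `π₀(G_P) → k`.
-/

namespace SimpleGraph

variable {V : Type*}

theorem Reachable.eq_of_forall_adj {G : SimpleGraph V} {β : Sort*} {f : V → β}
    (hf : ∀ u v, G.Adj u v → f u = f v) {u v : V} (h : G.Reachable u v) : f u = f v := by
  rw [reachable_iff_reflTransGen] at h
  induction h with
  | refl => rfl
  | tail _ hadj ih => exact ih.trans (hf _ _ hadj)

variable (G : SimpleGraph V) (R M : Type*) [Semiring R] [AddCommMonoid M] [Module R M]

theorem mem_range_funLeft_connectedComponentMk_iff {f : V → M} :
    f ∈ LinearMap.range (LinearMap.funLeft R M G.connectedComponentMk) ↔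
      ∀ u v, G.Adj u v → f u = f v := by
  constructor
  · rintro ⟨g, rfl⟩ u v huv
    exact congrArg g (ConnectedComponent.connectedComponentMk_eq_of_adj huv)
  · intro hf
    exact ⟨ConnectedComponent.lift f fun u v p _ => Reachable.eq_of_forall_adj hf ⟨p⟩, rfl⟩

theorem finrank_range_funLeft_connectedComponentMk [StrongRankCondition R]
    [Finite G.ConnectedComponent] :
    Module.finrank R (LinearMap.range (LinearMap.funLeft R R G.connectedComponentMk)) =
      Nat.card G.ConnectedComponent := by
  have := Fintype.ofFinite G.ConnectedComponent
  have hinj := LinearMap.funLeft_injective_of_surjective R R G.connectedComponentMk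
    Quot.mk_surjective
  rw [← (LinearEquiv.ofInjective _ hinj).finrank_eq, Module.finrank_pi, Nat.card_eq_fintype_card]

end SimpleGraph

theorem mem_SSub_iff {k V : Type*} [Field k] (P : Set (Tup V 2)) (h : V → k) :
    h ∈ SSub k P ↔ ∀ w ∈ P, h (w.1 0) = h (w.1 1) := by
  classical
  constructor
  · intro hh w hw
    have hsingle : Pi.single w 1 ∈ vanishOutside k P := fun x hx =>
      Pi.single_eq_of_ne (ne_of_mem_of_not_mem hw hx).symm 1
    simpa [diffFun, sub_eq_zero] using congrFun (hh _ hsingle) w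
  · intro hh a ha
    funext w
    by_cases hw : w ∈ P
    · simp [diffFun, hh w hw]
    · simp [diffFun, ha w hw]

theorem forall_pairGraph_adj_iff {V β : Type*} (P : Set (Tup V 2)) (f : V → β) :
    (∀ u v, (pairGraph P).Adj u v → f u = f v) ↔ ∀ w ∈ P, f (w.1 0) = f (w.1 1) := by
  constructor
  · exact fun hf w hw => hf _ _ ⟨w, hw, .inl ⟨rfl, rfl⟩⟩
  · rintro hf u v ⟨w, hw, ⟨rfl, rfl⟩ | ⟨rfl, rfl⟩⟩
    · exact hf w hw
    · exact (hf w hw).symm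

theorem stmt16_general {k V : Type*} [Field k] [Fintype V] (P : Set (Tup V 2)) :
    Module.finrank k (SSub k P) = Nat.card (pairGraph P).ConnectedComponent := by
  have hS : SSub k P =
      LinearMap.range (LinearMap.funLeft k k (pairGraph P).connectedComponentMk) := by
    ext h
    rw [mem_SSub_iff, SimpleGraph.mem_range_funLeft_connectedComponentMk_iff,
      forall_pairGraph_adj_iff]
  rw [hS, SimpleGraph.finrank_range_funLeft_connectedComponentMk]

/-- The dimension of `S(I)` equals the number of connected components of
the graph `G_P`. -/
theorem stmt16 {k V : Type*} [Field k] [Fintype V] (P : Set (Tup V 2)) (hP : P.Nonempty) :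
    Module.finrank k (SSub k P) = Nat.card (pairGraph P).ConnectedComponent :=
  stmt16_general P
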